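/- arXiv:1906.04136 — 4 statements merged into one kernel-verified Lean document; each statement's English description precedes it below -/
import Mathlib

section
/- In the free noncommutative algebra on variables ζ_{1,2},...,ζ_{n−1,n} (strand degree 1) and η_{1,2,3},...,η_{n−2,n−1,n} (strand degree 1), with degree-lexicographic order induced by ζ_{1,2} < η_{1,2,3} < ζ_{2,3} < η_{2,3,4} < ... < ζ_{n−1,n}, let G be the set of relations of types (1)–(10) from the text (commutators, skew-commutators, string relations, overlap relations). Then a degree-2 monomial is reduced with respect to G if and only if it is of one of the forms: ζ_{i,i+1}ζ_{j,j+1} with i+1 ≤ j−2; ζ_{i,i+1}η_{ℓ,ℓ+1,ℓ+2} with i+1 ≤ ℓ−1; η_{ℓ,ℓ+1,ℓ+2}ζ_{i,i+1} with ℓ+2 ≤ i−2; or η_{ℓ,ℓ+1,ℓ+2}η_{m,m+1,m+2} with ℓ+2 ≤ m−1. -/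
/-- Symbols: `Sum.inl i` stands for `ζ_{i,i+1}` (`1 ≤ i ≤ n−1`) and `Sum.inr j` for
`η_{j,j+1,j+2}` (`1 ≤ j ≤ n−2`). -/
abbrev PathSym := ℕ ⊕ ℕ

/-- The set of leading monomials (in the degree-lexicographic order induced by
`ζ_{1,2} < η_{1,2,3} < ζ_{2,3} < η_{2,3,4} < … < ζ_{n−1,n}`) of the relations (1)–(10):
(1) `η_j η_i` (`i<j`); (2) `η_j ζ_i` (`i ≤ j`); (3) `ζ_i η_j` (`j < i`);
(4) `ζ_j ζ_i` (`i<j`); (5) `η_i ζ_{i+3}`; (6) `ζ_i ζ_{i+2}`; (7) `ζ_i ζ_j`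
(`i = j−1, j`); (8) `ζ_i η_j` (`i ∈ {j−1,j,j+1,j+2}`); (9) `η_j ζ_i`
(`i ∈ {j−1,j,j+1,j+2}`); (10) `η_i η_j` (`i ∈ {j−2,j−1,j}`, `i ≤ j`). -/
def L13 (n : ℕ) : Set (List PathSym) := fun l =>
  (∃ i j, 1 ≤ i ∧ i < j ∧ j + 2 ≤ n ∧ l = [Sum.inr j, Sum.inr i]) ∨
  (∃ i j, 1 ≤ i ∧ i ≤ j ∧ i + 1 ≤ n ∧ j + 2 ≤ n ∧ l = [Sum.inr j, Sum.inl i]) ∨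
  (∃ i j, 1 ≤ j ∧ j < i ∧ i + 1 ≤ n ∧ j + 2 ≤ n ∧ l = [Sum.inl i, Sum.inr j]) ∨
  (∃ i j, 1 ≤ i ∧ i < j ∧ j + 1 ≤ n ∧ l = [Sum.inl j, Sum.inl i]) ∨
  (∃ i, 1 ≤ i ∧ i + 4 ≤ n ∧ l = [Sum.inr i, Sum.inl (i + 3)]) ∨
  (∃ i, 1 ≤ i ∧ i + 3 ≤ n ∧ l = [Sum.inl i, Sum.inl (i + 2)]) ∨
  (∃ i, 1 ≤ i ∧ i + 1 ≤ n ∧ l = [Sum.inl i, Sum.inl i]) ∨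
  (∃ i, 1 ≤ i ∧ i + 2 ≤ n ∧ l = [Sum.inl i, Sum.inl (i + 1)]) ∨
  (∃ i j, 1 ≤ i ∧ 1 ≤ j ∧ i + 1 ≤ n ∧ j + 2 ≤ n ∧
    (i + 1 = j ∨ i = j ∨ i = j + 1 ∨ i = j + 2) ∧ l = [Sum.inl i, Sum.inr j]) ∨
  (∃ i j, 1 ≤ i ∧ 1 ≤ j ∧ i + 1 ≤ n ∧ j + 2 ≤ n ∧
    (i + 1 = j ∨ i = j ∨ i = j + 1 ∨ i = j + 2) ∧ l = [Sum.inr j, Sum.inl i]) ∨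
  (∃ i j, 1 ≤ i ∧ i ≤ j ∧ j ≤ i + 2 ∧ i + 2 ≤ n ∧ j + 2 ≤ n ∧ l = [Sum.inr i, Sum.inr j])

/-- A word is reduced with respect to a set `L` of (leading) monomials if it contains no
element of `L` as a contiguous subword. -/
def ReducedWrt {α : Type*} (L : Set (List α)) (l : List α) : Prop :=
  ∀ μ ∈ L, ¬ μ <:+: l

lemma mem_L13_length {n : ℕ} {l : List PathSym} (h : l ∈ L13 n) : l.length = 2 := by
  simp only [L13, Membership.mem, Set.Mem] at h
  rcases h with ⟨i,j,h⟩|⟨i,j,h⟩|⟨i,j,h⟩|⟨i,j,h⟩|⟨i,h⟩|⟨i,h⟩|⟨i,h⟩|⟨i,h⟩|⟨i,j,h⟩|⟨i,j,h⟩|⟨i,j,h⟩ <;>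
    simp_all

lemma red2 {n : ℕ} (a b : PathSym) :
    ReducedWrt (L13 n) [a, b] ↔ [a, b] ∉ L13 n := by
  constructor
  · intro h hm
    exact h _ hm (List.infix_refl _)
  · intro h μ hμ hinf
    exact h ((hinf.eq_of_length (by rw [mem_L13_length hμ]; rfl)) ▸ hμ)

/-- Characterization of the reduced degree-2 monomials with respect to the relations
(1)–(10): `ζ_{i,i+1}ζ_{j,j+1}` is reduced iff `i+1 ≤ j−2`; `ζ_{i,i+1}η_{ℓ,ℓ+1,ℓ+2}` iff
`i+1 ≤ ℓ−1`; `η_{ℓ,ℓ+1,ℓ+2}ζ_{i,i+1}` iff `ℓ+2 ≤ i−2`; `η_{ℓ,ℓ+1,ℓ+2}η_{m,m+1,m+2}` iff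
`ℓ+2 ≤ m−1`. -/
theorem stmt_13 (n : ℕ) (hn : 3 ≤ n) :
    (∀ i j, 1 ≤ i → i + 1 ≤ n → 1 ≤ j → j + 1 ≤ n →
      (ReducedWrt (L13 n) [Sum.inl i, Sum.inl j] ↔ i + 3 ≤ j)) ∧
    (∀ i l, 1 ≤ i → i + 1 ≤ n → 1 ≤ l → l + 2 ≤ n →
      (ReducedWrt (L13 n) [Sum.inl i, Sum.inr l] ↔ i + 2 ≤ l)) ∧
    (∀ i l, 1 ≤ i → i + 1 ≤ n → 1 ≤ l → l + 2 ≤ n →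
      (ReducedWrt (L13 n) [Sum.inr l, Sum.inl i] ↔ l + 4 ≤ i)) ∧
    (∀ l m, 1 ≤ l → l + 2 ≤ n → 1 ≤ m → m + 2 ≤ n →
      (ReducedWrt (L13 n) [Sum.inr l, Sum.inr m] ↔ l + 3 ≤ m)) := by
  refine ⟨fun i j h1 h2 h3 h4 => ?_, fun i l h1 h2 h3 h4 => ?_,
    fun i l h1 h2 h3 h4 => ?_, fun l m h1 h2 h3 h4 => ?_⟩
  · rw [red2]
    simp only [L13, Membership.mem, Set.Mem]
    constructor
    · intro h
      by_contra hc
      apply h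
      have : j < i ∨ j = i ∨ j = i + 1 ∨ j = i + 2 := by omega
      rcases this with hx | rfl | rfl | rfl
      · exact Or.inr <| Or.inr <| Or.inr <| Or.inl ⟨j, i, h3, hx, h2, rfl⟩
      · exact Or.inr <| Or.inr <| Or.inr <| Or.inr <| Or.inr <| Or.inr <| Or.inl
          ⟨j, h1, h2, rfl⟩
      · exact Or.inr <| Or.inr <| Or.inr <| Or.inr <| Or.inr <| Or.inr <| Or.inr <| Or.inl
          ⟨i, h1, by omega, rfl⟩
      · exact Or.inr <| Or.inr <| Or.inr <| Or.inr <| Or.inr <| Or.inl ⟨i, h1, by omega, rfl⟩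
    · intro h hm
      rcases hm with ⟨a,b,hm⟩|⟨a,b,hm⟩|⟨a,b,hm⟩|⟨a,b,hm⟩|⟨a,hm⟩|⟨a,hm⟩|⟨a,hm⟩|⟨a,hm⟩|⟨a,b,hm⟩|⟨a,b,hm⟩|⟨a,b,hm⟩ <;>
        simp only [List.cons.injEq, Sum.inl.injEq, Sum.inr.injEq, reduceCtorEq, and_false,
          false_and, and_true, true_and] at hm <;> omega
  · rw [red2]
    simp only [L13, Membership.mem, Set.Mem]
    constructor
    · intro h
      by_contra hc
      apply h
      have : l < i ∨ i + 1 = l ∨ i = l := by omega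
      rcases this with hx | hx | hx
      · exact Or.inr <| Or.inr <| Or.inl ⟨i, l, h3, hx, h2, h4, rfl⟩
      · exact Or.inr <| Or.inr <| Or.inr <| Or.inr <| Or.inr <| Or.inr <| Or.inr <| Or.inr <|
          Or.inl ⟨i, l, h1, h3, h2, h4, Or.inl hx, rfl⟩
      · exact Or.inr <| Or.inr <| Or.inr <| Or.inr <| Or.inr <| Or.inr <| Or.inr <| Or.inr <|
          Or.inl ⟨i, l, h1, h3, h2, h4, Or.inr (Or.inl hx), rfl⟩
    · intro h hm
      rcases hm with ⟨a,b,hm⟩|⟨a,b,hm⟩|⟨a,b,hm⟩|⟨a,b,hm⟩|⟨a,hm⟩|⟨a,hm⟩|⟨a,hm⟩|⟨a,hm⟩|⟨a,b,hm⟩|⟨a,b,hm⟩|⟨a,b,hm⟩ <;>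
        simp only [List.cons.injEq, Sum.inl.injEq, Sum.inr.injEq, reduceCtorEq, and_false,
          false_and, and_true, true_and] at hm <;> omega
  · rw [red2]
    simp only [L13, Membership.mem, Set.Mem]
    constructor
    · intro h
      by_contra hc
      apply h
      have : i ≤ l ∨ i = l + 1 ∨ i = l + 2 ∨ i = l + 3 := by omega
      rcases this with hx | hx | hx | rfl
      · exact Or.inr <| Or.inl ⟨i, l, h1, hx, h2, h4, rfl⟩
      · exact Or.inr <| Or.inr <| Or.inr <| Or.inr <| Or.inr <| Or.inr <| Or.inr <| Or.inr <|
          Or.inr <| Or.inl ⟨i, l, h1, h3, h2, h4, Or.inr (Or.inr (Or.inl hx)), rfl⟩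
      · exact Or.inr <| Or.inr <| Or.inr <| Or.inr <| Or.inr <| Or.inr <| Or.inr <| Or.inr <|
          Or.inr <| Or.inl ⟨i, l, h1, h3, h2, h4, Or.inr (Or.inr (Or.inr hx)), rfl⟩
      · exact Or.inr <| Or.inr <| Or.inr <| Or.inr <| Or.inl ⟨l, h3, by omega, rfl⟩
    · intro h hm
      rcases hm with ⟨a,b,hm⟩|⟨a,b,hm⟩|⟨a,b,hm⟩|⟨a,b,hm⟩|⟨a,hm⟩|⟨a,hm⟩|⟨a,hm⟩|⟨a,hm⟩|⟨a,b,hm⟩|⟨a,b,hm⟩|⟨a,b,hm⟩ <;>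
        simp only [List.cons.injEq, Sum.inl.injEq, Sum.inr.injEq, reduceCtorEq, and_false,
          false_and, and_true, true_and] at hm <;> omega
  · rw [red2]
    simp only [L13, Membership.mem, Set.Mem]
    constructor
    · intro h
      by_contra hc
      apply h
      have : m < l ∨ (l ≤ m ∧ m ≤ l + 2) := by omega
      rcases this with hx | ⟨hx, hy⟩
      · exact Or.inl ⟨m, l, h3, hx, h2, rfl⟩
      · exact Or.inr <| Or.inr <| Or.inr <| Or.inr <| Or.inr <| Or.inr <| Or.inr <| Or.inr <|
          Or.inr <| Or.inr ⟨l, m, h1, hx, hy, h2, h4, rfl⟩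
    · intro h hm
      rcases hm with ⟨a,b,hm⟩|⟨a,b,hm⟩|⟨a,b,hm⟩|⟨a,b,hm⟩|⟨a,hm⟩|⟨a,hm⟩|⟨a,hm⟩|⟨a,hm⟩|⟨a,b,hm⟩|⟨a,b,hm⟩|⟨a,b,hm⟩ <;>
        simp only [List.cons.injEq, Sum.inl.injEq, Sum.inr.injEq, reduceCtorEq, and_false,
          false_and, and_true, true_and] at hm <;> omega
end

section
/- With notation as in the Gröbner basis analysis for the path edge ideal: every reduced monomial μ ≠ 1 in T with multigraded internal degree u ∈ ℤ^n satisfies (1) u is squarefree, and (2) if u has complete decomposition u = p_{i_1,r_1} + ... + p_{i_m,r_m} with i_1 < ... < i_m, then r_p ≢ 1 (mod 3) for each p and μ = μ_{i_1,r_1} ··· μ_{i_m,r_m}. In particular, for each multidegree u there is at most one reduced monomial of internal degree u. -/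
/-- The interval multidegree `p_{i,r} = e_i + … + e_{i+r−1}`. -/
def pInt (i r : ℕ) : ℕ → ℕ := fun t => if i ≤ t ∧ t < i + r then 1 else 0

/-- Complete decomposition of a multidegree into intervals with non-adjacent supports. -/
def IsCompleteDecomp (v : ℕ → ℕ) (L : List (ℕ × ℕ)) : Prop :=
  (∀ pr ∈ L, 1 ≤ pr.2) ∧
  List.Chain' (fun a b => a.1 + a.2 < b.1) L ∧
  ∀ t, v t = (L.map fun pr => pInt pr.1 pr.2 t).sum

/-- Multigraded internal degree of a generator: `ζ_{i,i+1} ↦ p_{i,2}`,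
`η_{j,j+1,j+2} ↦ p_{j,3}`. -/
def symDeg : PathSym → (ℕ → ℕ)
  | Sum.inl i => pInt i 2
  | Sum.inr j => pInt j 3

/-- Multigraded internal degree of a word. -/
def mdegL (l : List PathSym) : ℕ → ℕ := fun t => (l.map fun s => symDeg s t).sum

/-- Whether a symbol denotes a valid generator: `ζ_{i,i+1}` needs `1 ≤ i ≤ n−1`,
`η_{j,j+1,j+2}` needs `1 ≤ j ≤ n−2`. -/
def ValidSym (n : ℕ) : PathSym → Prop
  | Sum.inl i => 1 ≤ i ∧ i + 1 ≤ n
  | Sum.inr j => 1 ≤ j ∧ j + 2 ≤ n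

/-- A chain of `c` η-generators starting at `s`, with steps of 3. -/
def etaChain (s c : ℕ) : List PathSym := (List.range c).map fun t => Sum.inr (s + 3 * t)

/-- The monomial `μ_{i,r}` (for `r ≢ 1 mod 3`): `ζ_{i,i+1}·η_{i+2,·}···η_{i+r−3,·}` when
`r ≡ 2 mod 3`, and `η_{i,·}·η_{i+3,·}···η_{i+r−3,·}` when `r ≡ 0 mod 3`. -/
def muMon (i r : ℕ) : List PathSym :=
  if r % 3 = 2 then Sum.inl i :: etaChain (i + 2) ((r - 2) / 3) else etaChain i (r / 3)


/-! ### Auxiliary definitions and lemmas -/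

def lend : PathSym → ℕ | Sum.inl i => i | Sum.inr j => j
def slen : PathSym → ℕ | Sum.inl _ => 2 | Sum.inr _ => 3

@[simp] lemma lend_inl (i : ℕ) : lend (Sum.inl i) = i := rfl
@[simp] lemma lend_inr (j : ℕ) : lend (Sum.inr j) = j := rfl
@[simp] lemma slen_inl (i : ℕ) : slen (Sum.inl i) = 2 := rfl
@[simp] lemma slen_inr (j : ℕ) : slen (Sum.inr j) = 3 := rfl

def nextOk : PathSym → PathSym → Prop
  | a, Sum.inl j => lend a + slen a + 1 ≤ j
  | a, Sum.inr j => lend a + slen a ≤ j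

def Rint : ℕ × ℕ → ℕ × ℕ → Prop := fun a b => a.1 + a.2 < b.1

instance : IsTrans (ℕ × ℕ) Rint := ⟨by intro a b c hab hbc; simp only [Rint] at *; omega⟩

lemma pInt_add (i r s t : ℕ) : pInt i r t + pInt (i + r) s t = pInt i (r + s) t := by
  simp only [pInt]; split_ifs <;> omega

lemma symDeg_eq (a : PathSym) : symDeg a = pInt (lend a) (slen a) := by cases a <;> rfl

lemma mdegL_cons (a : PathSym) (l : List PathSym) (t : ℕ) :
    mdegL (a :: l) t = symDeg a t + mdegL l t := by simp [mdegL]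

lemma etaChain_succ (s c : ℕ) : etaChain s (c + 1) = Sum.inr s :: etaChain (s + 3) c := by
  unfold etaChain
  rw [List.range_succ_eq_map, List.map_cons, List.map_map]
  refine congrArg₂ _ (by simp) ?_
  apply List.map_congr_left
  intro t _
  simp only [Function.comp_apply]
  congr 1
  omega

lemma muMon_single (a : PathSym) : muMon (lend a) (slen a) = [a] := by
  cases a with
  | inl i => simp [muMon, lend, slen, etaChain]
  | inr j => simp [muMon, lend, slen, etaChain, List.range_succ]

lemma muMon_cons (a : PathSym) (r : ℕ) (h : r % 3 = 0) :
    muMon (lend a) (slen a + r) = a :: muMon (lend a + slen a) r := by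
  cases a with
  | inl i =>
    dsimp only [lend, slen, muMon]
    rw [if_pos (by omega), if_neg (by omega)]
    congr 2
    omega
  | inr j =>
    dsimp only [lend, slen, muMon]
    rw [if_neg (by omega), if_neg (by omega)]
    have h3 : (3 + r) / 3 = r / 3 + 1 := by omega
    rw [h3, etaChain_succ]

lemma ICD_eval {v : ℕ → ℕ} {i r : ℕ} {tl : List (ℕ × ℕ)}
    (h : IsCompleteDecomp v ((i, r) :: tl)) :
    (∀ t < i, v t = 0) ∧ (∀ t, i ≤ t → t < i + r → v t = 1) ∧ v (i + r) = 0 ∧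
    IsCompleteDecomp (fun t => if t ≤ i + r then 0 else v t) tl := by
  obtain ⟨hpos, hch, hsum⟩ := h
  have hpw : ∀ pr ∈ tl, i + r < pr.1 := by
    have := (List.isChain_iff_pairwise (R := Rint)).mp hch
    intro pr hpr
    exact (List.pairwise_cons.mp this).1 pr hpr
  have hz : ∀ t ≤ i + r, (tl.map fun pr => pInt pr.1 pr.2 t).sum = 0 := by
    intro t ht
    apply List.sum_eq_zero
    intro x hx
    simp only [List.mem_map] at hx
    obtain ⟨pr, hpr, rfl⟩ := hx
    have := hpw pr hpr
    simp only [pInt]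
    rw [if_neg]; omega
  refine ⟨?_, ?_, ?_, ?_, ?_, ?_⟩
  · intro t ht; rw [hsum, List.map_cons, List.sum_cons, hz t (by omega)]
    simp only [pInt]; rw [if_neg]; omega
  · intro t ht1 ht2; rw [hsum, List.map_cons, List.sum_cons, hz t (by omega)]
    simp only [pInt]; rw [if_pos]; omega
  · rw [hsum, List.map_cons, List.sum_cons, hz (i + r) le_rfl]
    simp only [pInt]; rw [if_neg]; omega
  · exact fun pr hpr => hpos pr (List.mem_cons_of_mem _ hpr)
  · exact hch.tail
  · intro t
    beta_reduce
    by_cases ht : t ≤ i + r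
    · rw [if_pos ht, hz t ht]
    · rw [if_neg ht, hsum, List.map_cons, List.sum_cons]
      have : pInt i r t = 0 := by simp only [pInt]; rw [if_neg]; omega
      rw [this, Nat.zero_add]

lemma ICD_le_one : ∀ (L : List (ℕ × ℕ)) (v : ℕ → ℕ), IsCompleteDecomp v L → ∀ t, v t ≤ 1 := by
  intro L
  induction L with
  | nil => intro v h t; rw [h.2.2 t]; simp
  | cons a tl ih =>
    obtain ⟨i, r⟩ := a
    intro v h t
    obtain ⟨h0, h1, h2, h3⟩ := ICD_eval h
    rcases lt_or_ge t i with ht | ht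
    · rw [h0 t ht]; omega
    rcases lt_or_ge t (i + r) with ht2 | ht2
    · rw [h1 t ht ht2]
    rcases eq_or_lt_of_le ht2 with ht3 | ht3
    · rw [← ht3, h2]; omega
    · have := ih _ h3 t
      rw [if_neg (by omega)] at this
      exact this

lemma ICD_unique : ∀ (L : List (ℕ × ℕ)) (v : ℕ → ℕ) (L' : List (ℕ × ℕ)),
    IsCompleteDecomp v L → IsCompleteDecomp v L' → L = L' := by
  intro L
  induction L with
  | nil =>
    intro v L' h h'
    cases L' with
    | nil => rfl
    | cons b tl' =>
      obtain ⟨i', r'⟩ := b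
      exfalso
      have hv : v i' = 1 := (ICD_eval h').2.1 i' le_rfl
        (by have := h'.1 (i', r') List.mem_cons_self; simp at this ⊢; omega)
      rw [h.2.2 i'] at hv
      simp at hv
  | cons a tl ih =>
    obtain ⟨i, r⟩ := a
    intro v L' h h'
    cases L' with
    | nil =>
      exfalso
      have hv : v i = 1 := (ICD_eval h).2.1 i le_rfl
        (by have := h.1 (i, r) List.mem_cons_self; simp at this ⊢; omega)
      rw [h'.2.2 i] at hv
      simp at hv
    | cons b tl' =>
      obtain ⟨i', r'⟩ := b
      have hr : 1 ≤ r := h.1 (i, r) List.mem_cons_self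
      have hr' : 1 ≤ r' := h'.1 (i', r') List.mem_cons_self
      obtain ⟨e0, e1, e2, e3⟩ := ICD_eval h
      obtain ⟨f0, f1, f2, f3⟩ := ICD_eval h'
      have hii : i = i' := by
        rcases lt_trichotomy i i' with hlt | heq | hgt
        · have := f0 i hlt; have := e1 i le_rfl (by omega); omega
        · exact heq
        · have := e0 i' hgt; have := f1 i' le_rfl (by omega); omega
      subst hii
      have hrr : r = r' := by
        rcases lt_trichotomy r r' with hlt | heq | hgt
        · have := f1 (i + r) (by omega) (by omega); omega
        · exact heq
        · have := e1 (i + r') (by omega) (by omega); omega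
      subst hrr
      rw [ih _ tl' e3 f3]

lemma chain'_of_infix_pairs {α : Type*} {P : α → α → Prop} :
    ∀ l : List α, (∀ a b, [a, b] <:+: l → P a b) → List.Chain' P l := by
  intro l
  induction l with
  | nil => intro _; exact List.isChain_nil
  | cons a t ih =>
    intro h
    cases t with
    | nil => exact List.isChain_singleton _
    | cons b t' =>
      refine List.isChain_cons_cons.mpr ⟨h a b ?_, ih ?_⟩
      · exact (show [a, b] <+: a :: b :: t' from ⟨t', rfl⟩).isInfix
      · intro x y hxy
        exact h x y (hxy.trans (List.infix_cons (List.infix_refl _)))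

lemma pair_ok {n : ℕ} {a b : PathSym} (ha : ValidSym n a) (hb : ValidSym n b)
    (h : [a, b] ∉ L13 n) : nextOk a b := by
  cases a with
  | inl i =>
    obtain ⟨hi1, hi2⟩ := ha
    cases b with
    | inl j =>
      obtain ⟨hj1, hj2⟩ := hb
      show i + 2 + 1 ≤ j
      by_contra hc
      apply h
      rcases lt_trichotomy j i with hlt | heq | hgt
      · exact Or.inr (Or.inr (Or.inr (Or.inl ⟨j, i, hj1, hlt, hi2, rfl⟩)))
      · exact Or.inr (Or.inr (Or.inr (Or.inr (Or.inr (Or.inr (Or.inl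
          ⟨i, hi1, hi2, by rw [heq]⟩))))))
      · rcases (by omega : j = i + 1 ∨ j = i + 2) with rfl | rfl
        · exact Or.inr (Or.inr (Or.inr (Or.inr (Or.inr (Or.inr (Or.inr (Or.inl
            ⟨i, hi1, by omega, rfl⟩)))))))
        · exact Or.inr (Or.inr (Or.inr (Or.inr (Or.inr (Or.inl ⟨i, hi1, by omega, rfl⟩)))))
    | inr j =>
      obtain ⟨hj1, hj2⟩ := hb
      show i + 2 ≤ j
      by_contra hc
      apply h
      rcases lt_or_ge j i with hlt | hge
      · exact Or.inr (Or.inr (Or.inl ⟨i, j, hj1, hlt, hi2, hj2, rfl⟩))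
      · refine Or.inr (Or.inr (Or.inr (Or.inr (Or.inr (Or.inr (Or.inr (Or.inr (Or.inl
          ⟨i, j, hi1, hj1, hi2, hj2, ?_, rfl⟩))))))))
        omega
  | inr i =>
    obtain ⟨hi1, hi2⟩ := ha
    cases b with
    | inl j =>
      obtain ⟨hj1, hj2⟩ := hb
      show i + 3 + 1 ≤ j
      by_contra hc
      apply h
      rcases le_or_gt j i with hle | hgt
      · exact Or.inr (Or.inl ⟨j, i, hj1, hle, hj2, hi2, rfl⟩)
      · rcases (by omega : j = i + 1 ∨ j = i + 2 ∨ j = i + 3) with rfl | rfl | rfl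
        · exact Or.inr (Or.inr (Or.inr (Or.inr (Or.inr (Or.inr (Or.inr (Or.inr (Or.inr (Or.inl
            ⟨i + 1, i, by omega, hi1, hj2, hi2, by omega, rfl⟩)))))))))
        · exact Or.inr (Or.inr (Or.inr (Or.inr (Or.inr (Or.inr (Or.inr (Or.inr (Or.inr (Or.inl
            ⟨i + 2, i, by omega, hi1, hj2, hi2, by omega, rfl⟩)))))))))
        · exact Or.inr (Or.inr (Or.inr (Or.inr (Or.inl ⟨i, hi1, by omega, rfl⟩))))
    | inr j =>
      obtain ⟨hj1, hj2⟩ := hb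
      show i + 3 ≤ j
      by_contra hc
      apply h
      rcases lt_or_ge j i with hlt | hge
      · exact Or.inl ⟨j, i, hj1, hlt, hi2, rfl⟩
      · refine Or.inr (Or.inr (Or.inr (Or.inr (Or.inr (Or.inr (Or.inr (Or.inr (Or.inr (Or.inr
          ⟨i, j, hi1, hge, by omega, hi2, hj2, rfl⟩)))))))))

lemma chain_of_reduced {n : ℕ} {μ : List PathSym} (hval : ∀ s ∈ μ, ValidSym n s)
    (hred : ReducedWrt (L13 n) μ) : List.Chain' nextOk μ := by
  apply chain'_of_infix_pairs
  intro a b hinf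
  have ha := hval a (hinf.subset (by simp))
  have hb := hval b (hinf.subset (by simp))
  exact pair_ok ha hb (fun hmem => hred _ hmem hinf)

lemma main_decomp : ∀ (rest : List PathSym) (a : PathSym), List.Chain' nextOk (a :: rest) →
    ∃ r tl, r % 3 = slen a % 3 ∧
      (∀ pr ∈ (lend a, r) :: tl, 1 ≤ pr.2 ∧ pr.2 % 3 ≠ 1) ∧
      List.Chain' Rint ((lend a, r) :: tl) ∧
      (∀ t, mdegL (a :: rest) t = (((lend a, r) :: tl).map fun pr => pInt pr.1 pr.2 t).sum) ∧
      a :: rest = (((lend a, r) :: tl).map fun pr => muMon pr.1 pr.2).flatten := by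
  intro rest
  induction rest with
  | nil =>
    intro a _
    refine ⟨slen a, [], rfl, ?_, ?_, ?_, ?_⟩
    · intro pr hpr
      simp only [List.mem_cons, List.not_mem_nil, or_false] at hpr
      subst hpr
      cases a <;> simp [slen]
    · exact List.isChain_singleton _
    · intro t
      simp [mdegL, symDeg_eq a]
    · simp [muMon_single a]
  | cons b rest' ih =>
    intro a hch
    have hab : nextOk a b := (List.isChain_cons_cons.mp hch).1
    have hch' : List.Chain' nextOk (b :: rest') := (List.isChain_cons_cons.mp hch).2
    obtain ⟨r', tl', hmod', hall', hchain', hmdeg', hflat'⟩ := ih b hch'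
    have hslen : 2 ≤ slen a := by cases a <;> simp [slen]
    by_cases hmerge : lend a + slen a = lend b
    · have hb : ∃ j, b = Sum.inr j := by
        cases b with
        | inl j =>
          exfalso
          have : lend a + slen a + 1 ≤ j := hab
          simp only [lend_inl, lend_inr] at hmerge
          omega
        | inr j => exact ⟨j, rfl⟩
      obtain ⟨j, rfl⟩ := hb
      have hm0 : r' % 3 = 0 := by simpa [slen] using hmod'
      have hs3 : slen a % 3 ≠ 1 := by cases a <;> simp [slen]
      refine ⟨slen a + r', tl', by omega, ?_, ?_, ?_, ?_⟩
      · intro pr hpr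
        rcases List.mem_cons.mp hpr with heq | hmem
        · subst heq
          refine ⟨by omega, by omega⟩
        · exact hall' pr (List.mem_cons_of_mem _ hmem)
      · simp only [List.Chain', List.isChain_cons] at hchain' ⊢
        refine ⟨?_, hchain'.2⟩
        intro c hc
        have := hchain'.1 c hc
        simp only [Rint, lend_inl, lend_inr] at this ⊢
        simp only [lend_inl, lend_inr] at hmerge
        omega
      · intro t
        rw [mdegL_cons, hmdeg' t]
        simp only [List.map_cons, List.sum_cons, symDeg_eq a]
        have hadd := pInt_add (lend a) (slen a) r' t
        rw [hmerge] at hadd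
        omega
      · have hmc := muMon_cons a r' hm0
        rw [hmerge] at hmc
        simp only [List.map_cons, List.flatten_cons] at hflat' ⊢
        rw [hmc, hflat']
        rfl
    · have hlt : lend a + slen a < lend b := by
        cases b with
        | inl j =>
          have : lend a + slen a + 1 ≤ j := hab
          simp only [lend_inl, lend_inr]; omega
        | inr j =>
          have : lend a + slen a ≤ j := hab
          simp only [lend_inl, lend_inr] at hmerge ⊢; omega
      have hs3 : slen a % 3 ≠ 1 := by cases a <;> simp [slen]
      refine ⟨slen a, (lend b, r') :: tl', rfl, ?_, ?_, ?_, ?_⟩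
      · intro pr hpr
        rcases List.mem_cons.mp hpr with heq | hmem
        · subst heq; exact ⟨by omega, hs3⟩
        · exact hall' pr hmem
      · exact List.isChain_cons_cons.mpr ⟨hlt, hchain'⟩
      · intro t
        rw [mdegL_cons, hmdeg' t]
        simp [symDeg_eq a]
      · simp only [List.map_cons, List.flatten_cons] at hflat' ⊢
        rw [muMon_single a, hflat']
        rfl

/-- Every reduced monomial `μ ≠ 1` with multigraded internal degree `u` satisfies:
(1) `u` is squarefree; (2) if `u` has complete decomposition
`u = p_{i_1,r_1} + … + p_{i_m,r_m}`, then each `r_p ≢ 1 (mod 3)` and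
`μ = μ_{i_1,r_1} ⋯ μ_{i_m,r_m}`.  In particular, for each multidegree `u` there is at
most one reduced monomial of internal degree `u`. -/
theorem stmt_14 (n : ℕ) (hn : 3 ≤ n) (μ : List PathSym) (hμne : μ ≠ [])
    (hval : ∀ s ∈ μ, ValidSym n s) (hred : ReducedWrt (L13 n) μ) :
    (∀ t, mdegL μ t ≤ 1) ∧
    (∀ L : List (ℕ × ℕ), IsCompleteDecomp (mdegL μ) L →
      (∀ pr ∈ L, pr.2 % 3 ≠ 1) ∧ μ = (L.map fun pr => muMon pr.1 pr.2).flatten) ∧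
    (∀ ν : List PathSym, (∀ s ∈ ν, ValidSym n s) → ReducedWrt (L13 n) ν →
      mdegL ν = mdegL μ → ν = μ) := by
  obtain ⟨a, rest, rfl⟩ : ∃ a rest, μ = a :: rest := by
    cases μ with
    | nil => exact absurd rfl hμne
    | cons a rest => exact ⟨a, rest, rfl⟩
  have hch := chain_of_reduced hval hred
  obtain ⟨r, tl, hmod, hall, hchain, hmdeg, hflat⟩ := main_decomp rest a hch
  set L₀ : List (ℕ × ℕ) := (lend a, r) :: tl with hL₀
  have hICD : IsCompleteDecomp (mdegL (a :: rest)) L₀ :=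
    ⟨fun pr h => (hall pr h).1, hchain, hmdeg⟩
  have hpart2 : ∀ L : List (ℕ × ℕ), IsCompleteDecomp (mdegL (a :: rest)) L →
      (∀ pr ∈ L, pr.2 % 3 ≠ 1) ∧
      a :: rest = (L.map fun pr => muMon pr.1 pr.2).flatten := by
    intro L hL
    have hLeq : L = L₀ := ICD_unique L _ L₀ hL hICD
    subst hLeq
    exact ⟨fun pr h => (hall pr h).2, hflat⟩
  refine ⟨fun t => ICD_le_one L₀ _ hICD t, hpart2, ?_⟩
  intro ν hvalν hredν hmdegν
  obtain ⟨b, restν, rfl⟩ : ∃ b restν, ν = b :: restν := by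
    cases ν with
    | nil =>
      exfalso
      have h1 : mdegL (a :: rest) (lend a) ≥ 1 := by
        rw [mdegL_cons, symDeg_eq a]
        have : pInt (lend a) (slen a) (lend a) = 1 := by
          simp only [pInt]; rw [if_pos]; constructor; omega
          cases a <;> simp [slen, lend] <;> omega
        omega
      have h0 : mdegL ([] : List PathSym) (lend a) = 0 := by simp [mdegL]
      rw [hmdegν] at h0
      omega
    | cons b restν => exact ⟨b, restν, rfl⟩
  have hchν := chain_of_reduced hvalν hredν
  obtain ⟨rν, tlν, _, hallν, hchainν, hmdegLν, hflatν⟩ := main_decomp restν b hchν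
  have hICDν : IsCompleteDecomp (mdegL (a :: rest)) ((lend b, rν) :: tlν) := by
    refine ⟨fun pr h => (hallν pr h).1, hchainν, ?_⟩
    intro t
    rw [← hmdegν]
    exact hmdegLν t
  rw [hflatν, ((hpart2 _ hICDν).2)]
end

section
/- Let R = k[X_1,...,X_n]/(X_1X_2,...,X_{n−1}X_n) with n ≥ 3 and H its Koszul homology algebra with the ℤ^n internal multigrading. Then H_{2,3} = ⊕_{j=1}^{n−2} H_{2, p_{j,3}}; i.e., every multidegree u with |u| = 3 and H_{2,u} ≠ 0 equals p_{j,3} = e_j + e_{j+1} + e_{j+2} for some 1 ≤ j ≤ n−2. -/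
lemma sort3 {a b c : ℕ} (hab : a ≠ b) (hac : a ≠ c) (hbc : b ≠ c) :
    ∃ x y z : ℕ, x < y ∧ y < z ∧ ∀ t, (t = a ∨ t = b ∨ t = c) ↔ (t = x ∨ t = y ∨ t = z) := by
  rcases hab.lt_or_gt with h1 | h1 <;> rcases hac.lt_or_gt with h2 | h2 <;>
    rcases hbc.lt_or_gt with h3 | h3
  · exact ⟨a, b, c, h1, h3, fun t => by tauto⟩
  · exact ⟨a, c, b, h2, h3, fun t => by tauto⟩
  · omega
  · exact ⟨c, a, b, h2, h1, fun t => by tauto⟩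
  · exact ⟨b, a, c, h1, h2, fun t => by tauto⟩
  · omega
  · exact ⟨b, c, a, h3, h2, fun t => by tauto⟩
  · exact ⟨c, b, a, h3, h1, fun t => by tauto⟩


/-- Let `R = k[X_1,…,X_n]/(X_1X_2,…,X_{n−1}X_n)` (`n ≥ 3`) and `H` its Koszul homology
algebra with the `ℤ^n`-internal multigrading; `Hdim i u = dim_k H_{i,u}`.  The grading is
supported on multidegrees with support in `[1,n]` (`hvars`); `H_{i,u} = 0` unless `u` is
squarefree (`hsq`); and by the Boocher–D'Alì–Grifo–Montaño–Sammartano dimension formula,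
`H_{*,u} = 0` whenever the complete decomposition of `u` contains an interval of length
`r ≡ 1 (mod 3)` (`hBDGMS`).  Conclusion: `H_{2,3} = ⊕_{j=1}^{n−2} H_{2,p_{j,3}}`, i.e.
every multidegree `u` with `|u| = 3` and `H_{2,u} ≠ 0` equals `p_{j,3}` for some
`1 ≤ j ≤ n−2`. -/
theorem stmt_16 (n : ℕ) (hn : 3 ≤ n) (Hdim : ℕ → (ℕ → ℕ) → ℕ)
    (hvars : ∀ (i : ℕ) (u : ℕ → ℕ), Hdim i u ≠ 0 → ∀ t, u t ≠ 0 → 1 ≤ t ∧ t ≤ n)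
    (hsq : ∀ (i : ℕ) (u : ℕ → ℕ), (∃ t, 2 ≤ u t) → Hdim i u = 0)
    (hBDGMS : ∀ (i : ℕ) (u : ℕ → ℕ) (L : List (ℕ × ℕ)), IsCompleteDecomp u L →
      (∃ pr ∈ L, pr.2 % 3 = 1) → Hdim i u = 0) :
    ∀ u : ℕ → ℕ, (∑ᶠ t, u t) = 3 → Hdim 2 u ≠ 0 →
      ∃ j, 1 ≤ j ∧ j + 2 ≤ n ∧ u = pInt j 3 := by
  intro u hsum hne
  have hle : ∀ t, u t ≤ 1 := by
    intro t
    by_contra h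
    exact hne (hsq 2 u ⟨t, by omega⟩)
  have hfin : (Function.support u).Finite := by
    by_contra h
    rw [finsum_of_infinite_support h] at hsum
    omega
  have hsum' : ∑ t ∈ hfin.toFinset, u t = 3 := by
    rw [← finsum_eq_sum u hfin]; exact hsum
  have hcard : hfin.toFinset.card = 3 := by
    have : ∑ t ∈ hfin.toFinset, u t = ∑ t ∈ hfin.toFinset, 1 := by
      apply Finset.sum_congr rfl
      intro t ht
      have ht' : u t ≠ 0 := by simpa [Function.mem_support] using ht
      have := hle t; omega
    rw [this, Finset.sum_const, smul_eq_mul, mul_one] at hsum'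
    exact hsum'
  obtain ⟨a, b, c, hab, hac, hbc, hS⟩ := Finset.card_eq_three.mp hcard
  obtain ⟨x, y, z, hxy, hyz, hiff0⟩ := sort3 hab hac hbc
  have hiff : ∀ t, u t ≠ 0 ↔ (t = x ∨ t = y ∨ t = z) := by
    intro t
    rw [← hiff0 t, ← Function.mem_support, ← Set.Finite.mem_toFinset hfin, hS]
    simp
  have hind : ∀ t, u t = if (t = x ∨ t = y ∨ t = z) then 1 else 0 := by
    intro t
    split_ifs with h
    · have := (hiff t).2 h; have := hle t; omega
    · by_contra h'
      exact h ((hiff t).1 h')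
  have hx1 : 1 ≤ x := (hvars 2 u hne x ((hiff x).2 (Or.inl rfl))).1
  have hzn : z ≤ n := (hvars 2 u hne z ((hiff z).2 (Or.inr (Or.inr rfl)))).2
  by_cases hcase : y = x + 1 ∧ z = x + 2
  · refine ⟨x, hx1, by omega, ?_⟩
    funext t
    rw [hind t]
    simp only [pInt]
    obtain ⟨h1, h2⟩ := hcase
    split_ifs <;> omega
  · exfalso
    by_cases h1 : y = x + 1
    · have hz : y + 1 < z := by omega
      refine hne (hBDGMS 2 u [(x, 2), (z, 1)] ⟨?_, ?_, ?_⟩ ⟨(z, 1), by simp, rfl⟩)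
      · intro pr hpr; simp at hpr; rcases hpr with h | h <;> simp [h]
      · simp [List.Chain', List.isChain_cons_cons]; omega
      · intro t; rw [hind t]; simp only [pInt, List.map, List.sum_cons, List.sum_nil]
        split_ifs <;> omega
    · have hxy' : x + 1 < y := by omega
      by_cases h2 : z = y + 1
      · refine hne (hBDGMS 2 u [(x, 1), (y, 2)] ⟨?_, ?_, ?_⟩ ⟨(x, 1), by simp, rfl⟩)
        · intro pr hpr; simp at hpr; rcases hpr with h | h <;> simp [h]
        · simp [List.Chain', List.isChain_cons_cons]; omega
        · intro t; rw [hind t]; simp only [pInt, List.map, List.sum_cons, List.sum_nil]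
          split_ifs <;> omega
      · have hz : y + 1 < z := by omega
        refine hne (hBDGMS 2 u [(x, 1), (y, 1), (z, 1)] ⟨?_, ?_, ?_⟩ ⟨(x, 1), by simp, rfl⟩)
        · intro pr hpr; simp at hpr; rcases hpr with h | h | h <;> simp [h]
        · simp [List.Chain', List.isChain_cons_cons]; omega
        · intro t; rw [hind t]; simp only [pInt, List.map, List.sum_cons, List.sum_nil]
          split_ifs <;> omega
end

section
/- Let R be a standard graded k-algebra of embedding dimension n, H its Koszul homology algebra, and suppose the Avramov spectral sequence E²_{p,q,j} = ⊕_{i=0}^n Tor^H_p(k,k)_{q−i,j−i}^{C(n,i)} ⇒ Tor^R_{p+q}(k,k)_j converges with differentials d^r : E^r_{p,q,j} → E^r_{p−r,q+r−1,j}, and that β^H_{p,i,j}(k) ≠ 0 implies i ≥ p and j − i ≥ p (as guaranteed by the shape of H). Then β^R_{2,j}(k) = β^H_{1,1,j}(k) for all j > 2, and β^R_{2,2}(k) = C(n,2) + β^H_{1,1,2}(k). -/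
/-- Low-degree Betti number relations from the Avramov spectral sequence.  Let `R` be a
standard graded `k`-algebra of embedding dimension `n` and `H` its Koszul homology
algebra, with `βH p i j = dim Tor^H_p(k,k)_{i,j}` (zero for `p < 0`, with
`Tor^H_0(k,k) = k` in bidegree `(0,0)` — `hβ0` — and satisfying the shape condition
`βH p i j ≠ 0 → 0 ≤ p ≤ i` and `p ≤ j − i` — `hshape`) and
`βR m j = dim Tor^R_m(k,k)_j`.  The Avramov spectral sequence
`E²_{p,q,j} = ⊕_{i=0}^n Tor^H_p(k,k)_{q−i,j−i}^{C(n,i)} ⇒ Tor^R_{p+q}(k,k)_j` is encoded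
dimensionwise: `D r p q j` is the dimension of the `r`-th page (`hD2` identifies the
second page), `ρ r p q j` the rank of `d^r : E^r_{p,q,j} → E^r_{p−r,q+r−1,j}`, pages are
computed by taking homology (`hpage`), stabilize to `E^∞` (`hstab`), and convergence
gives `βR m j = Σ_{p+q=m} dim E^∞_{p,q,j}` (`hconv`).  Conclusions:
`β^R_{2,j}(k) = β^H_{1,1,j}(k)` for `j > 2`, and
`β^R_{2,2}(k) = C(n,2) + β^H_{1,1,2}(k)`. -/
theorem stmt_19 (n : ℕ) (βH : ℤ → ℤ → ℤ → ℕ) (βR : ℤ → ℤ → ℕ)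
    (D ρ : ℕ → ℤ → ℤ → ℤ → ℕ) (Einf : ℤ → ℤ → ℤ → ℕ)
    (hshape : ∀ p i j, βH p i j ≠ 0 → 0 ≤ p ∧ p ≤ i ∧ p ≤ j - i)
    (hβ0 : ∀ i j, βH 0 i j = if i = 0 ∧ j = 0 then 1 else 0)
    (hD2 : ∀ p q j, D 2 p q j =
      ∑ i ∈ Finset.range (n + 1), n.choose i * βH p (q - (i : ℤ)) (j - (i : ℤ)))
    (hpage : ∀ r, 2 ≤ r → ∀ p q j,
      D (r + 1) p q j + ρ r p q j + ρ r (p + r) (q - r + 1) j = D r p q j)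
    (hrank : ∀ r, 2 ≤ r → ∀ p q j, ρ r p q j ≤ D r p q j)
    (hrank' : ∀ r, 2 ≤ r → ∀ p q j, ρ r p q j ≤ D r (p - r) (q + r - 1) j)
    (hstab : ∀ p q j, ∃ r0, 2 ≤ r0 ∧ ∀ r, r0 ≤ r → D r p q j = Einf p q j)
    (hconv : ∀ m j, βR m j = ∑ᶠ p : ℤ, Einf p (m - p) j) :
    (∀ j : ℤ, 2 < j → βR 2 j = βH 1 1 j) ∧ βR 2 2 = n.choose 2 + βH 1 1 2 := by
  -- vanishing criterion for the second page
  have hzero : ∀ p q j : ℤ, (p < 0 ∨ q < p ∨ j - q < p) → D 2 p q j = 0 := by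
    intro p q j h
    rw [hD2]
    apply Finset.sum_eq_zero
    intro i _
    have hb : βH p (q - (i : ℤ)) (j - (i : ℤ)) = 0 := by
      by_contra hne
      obtain ⟨h1, h2, h3⟩ := hshape _ _ _ hne
      omega
    simp [hb]
  -- pages are decreasing
  have hmono : ∀ r, 2 ≤ r → ∀ p q j, D r p q j ≤ D 2 p q j := by
    intro r hr
    induction r with
    | zero => omega
    | succ r ih =>
      intro p q j
      rcases Nat.lt_or_ge r 2 with h | h
      · interval_cases r
        · omega
        · exact le_refl _
      · have h1 := hpage r h p q j
        have h2 := ih h p q j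
        omega
  have hEinf_le : ∀ p q j, Einf p q j ≤ D 2 p q j := by
    intro p q j
    obtain ⟨r0, hr0, hst⟩ := hstab p q j
    rw [← hst r0 le_rfl]
    exact hmono r0 hr0 p q j
  -- if all incoming and outgoing differentials vanish, Einf = E2
  have hconst : ∀ p q j : ℤ,
      (∀ r : ℕ, 2 ≤ r → D 2 (p + (r : ℤ)) (q - (r : ℤ) + 1) j = 0) →
      (∀ r : ℕ, 2 ≤ r → D 2 (p - (r : ℤ)) (q + (r : ℤ) - 1) j = 0) →
      Einf p q j = D 2 p q j := by
    intro p q j hin hout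
    have key : ∀ r, 2 ≤ r → D r p q j = D 2 p q j := by
      intro r hr
      induction r with
      | zero => omega
      | succ r ih =>
        rcases Nat.lt_or_ge r 2 with h | h
        · interval_cases r
          · omega
          · rfl
        · have h1 : ρ r (p + (r : ℤ)) (q - (r : ℤ) + 1) j = 0 := by
            have a := hrank r h (p + (r : ℤ)) (q - (r : ℤ) + 1) j
            have b := hmono r h (p + (r : ℤ)) (q - (r : ℤ) + 1) j
            have c := hin r h
            omega
          have h2 : ρ r p q j = 0 := by
            have a := hrank' r h p q j
            have b := hmono r h (p - (r : ℤ)) (q + (r : ℤ) - 1) j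
            have c := hout r h
            omega
          have h3 := hpage r h p q j
          have h4 := ih h
          omega
    obtain ⟨r0, hr0, hst⟩ := hstab p q j
    rw [← hst r0 le_rfl, key r0 hr0]
  -- compute E2 at (1,1)
  have hD11 : ∀ j, D 2 1 1 j = βH 1 1 j := by
    intro j
    rw [hD2, Finset.sum_eq_single 0]
    · simp
    · intro i hi hne
      have hb : βH 1 (1 - (i : ℤ)) (j - (i : ℤ)) = 0 := by
        by_contra h
        obtain ⟨_, h2, _⟩ := hshape _ _ _ h
        have : 1 ≤ i := Nat.one_le_iff_ne_zero.mpr hne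
        omega
      simp [hb]
    · intro h
      exact absurd (Finset.mem_range.mpr (Nat.succ_pos n)) h
  -- compute E2 at (0,2)
  have hD02 : ∀ j : ℤ, D 2 0 2 j = if j = 2 then n.choose 2 else 0 := by
    intro j
    rw [hD2]
    have hterm : ∀ i : ℕ, n.choose i * βH 0 (2 - (i : ℤ)) (j - (i : ℤ)) =
        if i = 2 ∧ j = 2 then n.choose 2 else 0 := by
      intro i
      rw [hβ0]
      by_cases h : i = 2 ∧ j = 2
      · obtain ⟨h1, h2⟩ := h
        subst h1; subst h2
        norm_num
      · have hne : ¬(2 - (i : ℤ) = 0 ∧ j - (i : ℤ) = 0) := by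
          rintro ⟨a, b⟩
          exact h ⟨by omega, by omega⟩
        rw [if_neg hne, if_neg h, mul_zero]
    rw [Finset.sum_congr rfl (fun i _ => hterm i)]
    by_cases hj : j = 2
    · simp only [hj, and_true]
      rw [Finset.sum_ite_eq' (Finset.range (n + 1)) 2 (fun _ => n.choose 2)]
      simp only [if_true]
      by_cases hn : 2 ≤ n
      · rw [if_pos (Finset.mem_range.mpr (by omega))]
      · rw [if_neg (by simp; omega), Nat.choose_eq_zero_of_lt (by omega)]
    · rw [if_neg hj]
      apply Finset.sum_eq_zero
      intro i _
      rw [if_neg (by tauto)]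
  -- Einf values
  have hE11 : ∀ j, Einf 1 1 j = βH 1 1 j := by
    intro j
    rw [hconst 1 1 j (fun r hr => hzero _ _ _ (by omega))
      (fun r hr => hzero _ _ _ (by omega)), hD11]
  have hE02 : ∀ j, Einf 0 2 j = D 2 0 2 j :=
    fun j => hconst 0 2 j (fun r hr => hzero _ _ _ (by omega))
      (fun r hr => hzero _ _ _ (by omega))
  have hEother : ∀ p j : ℤ, p ≠ 0 → p ≠ 1 → Einf p (2 - p) j = 0 := by
    intro p j h0 h1
    have := hEinf_le p (2 - p) j
    have := hzero p (2 - p) j (by omega)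
    omega
  -- convergence sum
  have hsum : ∀ j : ℤ, βR 2 j = Einf 0 2 j + Einf 1 1 j := by
    intro j
    rw [hconv 2 j]
    rw [finsum_eq_sum_of_support_subset (fun p => Einf p (2 - p) j)
      (s := ({0, 1} : Finset ℤ)) ?_]
    · norm_num [Finset.sum_pair (show (0 : ℤ) ≠ 1 by norm_num)]
    · intro p hp
      simp only [Function.mem_support] at hp
      simp only [Finset.coe_insert, Finset.coe_singleton, Set.mem_insert_iff,
        Set.mem_singleton_iff]
      by_contra hc
      push_neg at hc
      exact hp (hEother p j hc.1 hc.2)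
  constructor
  · intro j hj
    rw [hsum j, hE11, hE02, hD02, if_neg (by omega), zero_add]
  · rw [hsum 2, hE11, hE02, hD02, if_pos rfl]
end
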